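/- arXiv:2404.13641 — 2 statements merged into one kernel-verified Lean document; each statement's English description precedes it below -/
import Mathlib

section
/- For every ε ∈ (0,1] and every x̂ ≥ 0, the integral ∫₀^{x̂} ((ε²x̂ + 1)/(ε²(x̂ − ŷ) + 1))^{3/2} · exp(−2ŷ) dŷ is bounded above by ∫₀^∞ (1 + ŷ)^{3/2} exp(−2ŷ) dŷ, which is finite. -/
open Real MeasureTheory intervalIntegral

/-!
For `0 ≤ y ≤ x` and `0 ≤ ε² ≤ 1` the base of the integrand satisfies
`(ε² x + 1) / (ε² (x - y) + 1) ≤ 1 + y`, uniformly in `ε` and `x`. Hence the integrand is dominated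
by `(1 + y) ^ (3/2) * exp (-2 y)`, which is nonnegative and, decaying like `exp (-y)`, integrable
on `(0, ∞)`.
-/

open Set Filter Asymptotics in
theorem integrableOn_one_add_rpow_mul_exp_neg (s : ℝ) {b : ℝ} (hb : 0 < b) :
    IntegrableOn (fun y : ℝ => (1 + y) ^ s * exp (-b * y)) (Ioi 0) := by
  refine integrable_of_isBigO_exp_neg (half_pos hb) ?_ ?_
  · refine .mul (.rpow_const (by fun_prop) fun y (hy : 0 ≤ y) => .inl ?_) (by fun_prop)
    positivity
  · -- `(1 + y) ^ s = o(exp (b/2 * (1 + y)))`, and the shift only costs the constant `exp (b/2)`.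
    have hpow : (fun y : ℝ => (1 + y) ^ s) =O[atTop] fun y => exp (b / 2 * y) := by
      refine ((isLittleO_rpow_exp_pos_mul_atTop s (half_pos hb)).isBigO.comp_tendsto
        (tendsto_atTop_add_const_left _ 1 tendsto_id)).trans ?_
      refine (isBigO_refl (fun y : ℝ => exp (b / 2 * y)) atTop).const_mul_left (exp (b / 2))
        |>.congr_left fun y => ?_
      simp only [Function.comp_apply, id, mul_add, mul_one, exp_add]
    refine (hpow.mul (isBigO_refl (fun y : ℝ => exp (-b * y)) atTop)).congr_right fun y => ?_
    rw [← exp_add]; ring_nf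

theorem intervalIntegral_le_integral_Ioi_of_le {f g : ℝ → ℝ} {a x : ℝ} (hax : a ≤ x)
    (hg : IntegrableOn g (Set.Ioi a)) (hg0 : ∀ y ∈ Set.Ioi a, 0 ≤ g y)
    (hf0 : ∀ y ∈ Set.Ioc a x, 0 ≤ f y) (hfg : ∀ y ∈ Set.Ioc a x, f y ≤ g y) :
    ∫ y in a..x, f y ≤ ∫ y in Set.Ioi a, g y := by
  rw [intervalIntegral.integral_of_le hax]
  calc ∫ y in Set.Ioc a x, f y
      ≤ ∫ y in Set.Ioc a x, g y :=
        integral_mono_of_nonneg ((ae_restrict_iff' measurableSet_Ioc).2 (.of_forall hf0))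
          (hg.mono_set Set.Ioc_subset_Ioi_self)
          ((ae_restrict_iff' measurableSet_Ioc).2 (.of_forall hfg))
    _ ≤ ∫ y in Set.Ioi a, g y :=
        setIntegral_mono_set hg ((ae_restrict_iff' measurableSet_Ioi).2 (.of_forall hg0))
          Set.Ioc_subset_Ioi_self.eventuallyLE

theorem one_le_div_and_div_le_one_add {a x y : ℝ} (ha0 : 0 ≤ a) (ha1 : a ≤ 1) (hy0 : 0 ≤ y)
    (hyx : y ≤ x) :
    1 ≤ (a * x + 1) / (a * (x - y) + 1) ∧ (a * x + 1) / (a * (x - y) + 1) ≤ 1 + y := by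
  have hden : 0 < a * (x - y) + 1 := by nlinarith
  constructor
  · rw [one_le_div hden]; nlinarith
  · rw [div_le_iff₀ hden]; nlinarith [mul_nonneg (mul_nonneg ha0 hy0) (sub_nonneg.2 hyx)]

theorem preasymptotic_bound (ε : ℝ) (hε0 : 0 < ε) (hε1 : ε ≤ 1) (x : ℝ) (hx : 0 ≤ x) :
    (∫ y in (0 : ℝ)..x,
        ((ε ^ 2 * x + 1) / (ε ^ 2 * (x - y) + 1)) ^ ((3 : ℝ) / 2) * Real.exp (-2 * y)) ≤
      (∫ y in Set.Ioi (0 : ℝ), (1 + y) ^ ((3 : ℝ) / 2) * Real.exp (-2 * y)) ∧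
    IntegrableOn (fun y : ℝ => (1 + y) ^ ((3 : ℝ) / 2) * Real.exp (-2 * y))
      (Set.Ioi (0 : ℝ)) := by
  have hg := integrableOn_one_add_rpow_mul_exp_neg (3 / 2) two_pos
  have hbase (y : ℝ) (hy : y ∈ Set.Ioc 0 x) := one_le_div_and_div_le_one_add (sq_nonneg ε)
    (pow_le_one₀ hε0.le hε1) hy.1.le hy.2
  refine ⟨intervalIntegral_le_integral_Ioi_of_le hx hg (fun y (hy : 0 < y) => by positivity)
    (fun y hy => ?_) (fun y hy => ?_), hg⟩
  · exact mul_nonneg (rpow_nonneg (by linarith [(hbase y hy).1]) _) (exp_pos _).le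
  · exact mul_le_mul_of_nonneg_right
      (rpow_le_rpow (by linarith [(hbase y hy).1]) (hbase y hy).2 (by norm_num)) (exp_pos _).le
end

section
/- Let ε > 0 and let B : [1,∞) → ℝ be differentiable with B(1) = 4, B ≥ 0, and satisfying the differential inequality dB/dx − (3/2)·B/x ≤ C·ε²·B^{1/2}/x² for all x ≥ 1, where C > 0 is a constant and ε ≤ 1. Then (B(x)/x^{3/2})^{1/2} ≤ 2 + C·ε² for all x ≥ 1; in particular B(x) ≤ (2 + C)²·x^{3/2}. -/
open Real

/-!
Write `B = u² x^α` with `u ≥ 0`, so that `√B = u x^{α/2}`. The differential inequality says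
exactly that `u` grows no faster than `K x^{-(α/2+2)} / 2`; since this rate is integrable on
`[1, ∞)`, `u` stays below `u(1) + K / (α/2 + 1)`. Rather than dividing by `√B`, which may vanish,
we compare `B` with the explicit majorant `ψ = v² x^α`, where `v' = K x^{-(α/2+2)}`: the factor-two
margin makes `ψ' > B'` wherever `B = ψ`, so `B` can never cross `ψ`.
-/

theorem le_of_hasDerivAt_lt_of_eq {f f' g g' : ℝ → ℝ} {a : ℝ}
    (hf : ∀ x, a ≤ x → HasDerivAt f (f' x) x) (hg : ∀ x, a ≤ x → HasDerivAt g (g' x) x)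
    (ha : f a ≤ g a) (hlt : ∀ x, a ≤ x → f x = g x → f' x < g' x) :
    ∀ x, a ≤ x → f x ≤ g x := fun x hx =>
  image_le_of_deriv_right_lt_deriv_boundary' (b := x)
    (fun y hy => (hf y hy.1).continuousAt.continuousWithinAt)
    (fun y hy => (hf y hy.1).hasDerivWithinAt) ha
    (fun y hy => (hg y hy.1).continuousAt.continuousWithinAt)
    (fun y hy => (hg y hy.1).hasDerivWithinAt) (fun y hy => hlt y hy.1) ⟨hx, le_rfl⟩

/-- At a contact point `B = u² t^α`, the bound on `B'` given by the differential inequality is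
strictly below the derivative of `u² t^α` when `u' = K t^{-(α/2+2)}`. -/
theorem rpow_drift_lt_deriv {α K u t : ℝ} (hK : 0 < K) (ht : 0 < t) (hu : 0 < u) :
    α * (u ^ 2 * t ^ α) / t + K * √(u ^ 2 * t ^ α) / t ^ 2 <
      2 * u * (K * t ^ (-(α / 2 + 2))) * t ^ α + u ^ 2 * (α * t ^ (α - 1)) := by
  have hsqrt : √(u ^ 2 * t ^ α) = u * t ^ (α / 2) := by
    have hsq : t ^ α = (t ^ (α / 2)) ^ 2 := by
      rw [← rpow_mul_natCast ht.le]; ring_nf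
    rw [hsq, ← mul_pow, sqrt_sq (by positivity)]
  have hdiv : t ^ α / t = t ^ (α - 1) := (rpow_sub_one ht.ne' α).symm
  have hdiv2 : t ^ (α / 2) / t ^ 2 = t ^ (α / 2 - 2) := by
    exact_mod_cast (rpow_sub_natCast ht.ne' (α / 2) 2).symm
  have hmul : t ^ (-(α / 2 + 2)) * t ^ α = t ^ (α / 2 - 2) := by
    rw [← rpow_add ht]; ring_nf
  have hpos : 0 < K * u * t ^ (α / 2 - 2) := by positivity
  calc α * (u ^ 2 * t ^ α) / t + K * √(u ^ 2 * t ^ α) / t ^ 2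
      = u ^ 2 * (α * t ^ (α - 1)) + K * u * t ^ (α / 2 - 2) := by
        rw [hsqrt, ← hdiv, ← hdiv2]; ring
    _ < u ^ 2 * (α * t ^ (α - 1)) + 2 * (K * u * t ^ (α / 2 - 2)) := by linarith
    _ = 2 * u * (K * t ^ (-(α / 2 + 2))) * t ^ α + u ^ 2 * (α * t ^ (α - 1)) := by
        rw [← hmul]; ring

noncomputable section Majorant

variable (u₀ α K : ℝ)

def gronwallEnvelope (t : ℝ) : ℝ := u₀ + K / (α / 2 + 1) * (1 - t ^ (-(α / 2 + 1)))

def gronwallMajorant (t : ℝ) : ℝ := gronwallEnvelope u₀ α K t ^ 2 * t ^ α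

variable {u₀ α K}

theorem gronwallEnvelope_one : gronwallEnvelope u₀ α K 1 = u₀ := by
  simp [gronwallEnvelope]

theorem le_gronwallEnvelope (hα : -2 < α) (hK : 0 ≤ K) {t : ℝ} (ht : 1 ≤ t) :
    u₀ ≤ gronwallEnvelope u₀ α K t := by
  have hpow : t ^ (-(α / 2 + 1)) ≤ 1 := rpow_le_one_of_one_le_of_nonpos ht (by linarith)
  have hcoef : 0 ≤ K / (α / 2 + 1) := div_nonneg hK (by linarith)
  unfold gronwallEnvelope
  nlinarith

theorem gronwallEnvelope_le (hα : -2 < α) (hK : 0 ≤ K) {t : ℝ} (ht : 0 ≤ t) :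
    gronwallEnvelope u₀ α K t ≤ u₀ + K / (α / 2 + 1) := by
  have hpow : 0 ≤ t ^ (-(α / 2 + 1)) := rpow_nonneg ht _
  have hcoef : 0 ≤ K / (α / 2 + 1) := div_nonneg hK (by linarith)
  unfold gronwallEnvelope
  nlinarith

theorem hasDerivAt_gronwallEnvelope (hα : α ≠ -2) {t : ℝ} (ht : 0 < t) :
    HasDerivAt (gronwallEnvelope u₀ α K) (K * t ^ (-(α / 2 + 2))) t := by
  have hp : α + 2 ≠ 0 := fun h => hα (by linarith)
  have h := (((hasDerivAt_rpow_const (p := -(α / 2 + 1)) (Or.inl ht.ne')).const_sub 1).const_mul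
    (K / (α / 2 + 1))).const_add u₀
  refine h.congr_deriv ?_
  rw [show -(α / 2 + 1) - 1 = -(α / 2 + 2) by ring]
  field_simp

theorem hasDerivAt_gronwallMajorant (hα : α ≠ -2) {t : ℝ} (ht : 0 < t) :
    HasDerivAt (gronwallMajorant u₀ α K)
      (2 * gronwallEnvelope u₀ α K t * (K * t ^ (-(α / 2 + 2))) * t ^ α +
        gronwallEnvelope u₀ α K t ^ 2 * (α * t ^ (α - 1))) t := by
  have h := ((hasDerivAt_gronwallEnvelope (u₀ := u₀) (K := K) hα ht).pow 2).mul
    (hasDerivAt_rpow_const (p := α) (Or.inl ht.ne'))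
  refine h.congr_deriv ?_
  simp only [Nat.cast_ofNat, Pi.pow_apply]
  ring

variable {B B' : ℝ → ℝ}

theorem le_gronwallMajorant (hα : -2 < α) (hK : 0 < K) (hu₀ : 0 < u₀) (hB1 : B 1 ≤ u₀ ^ 2)
    (hderiv : ∀ x, 1 ≤ x → HasDerivAt B (B' x) x)
    (hineq : ∀ x, 1 ≤ x → B' x - α * B x / x ≤ K * √(B x) / x ^ 2) :
    ∀ x, 1 ≤ x → B x ≤ gronwallMajorant u₀ α K x := by
  refine le_of_hasDerivAt_lt_of_eq hderiv
    (fun x hx => hasDerivAt_gronwallMajorant (u₀ := u₀) (K := K) hα.ne' (by linarith)) ?_ ?_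
  · simpa [gronwallMajorant, gronwallEnvelope_one] using hB1
  · intro x hx hBx
    have hdrift := rpow_drift_lt_deriv (α := α) hK (by linarith : (0 : ℝ) < x)
      (hu₀.trans_le (le_gronwallEnvelope (t := x) hα hK.le hx))
    have hBineq := hineq x hx
    rw [hBx] at hBineq
    unfold gronwallMajorant at hBineq
    linarith

theorem sqrt_div_rpow_le_of_deriv_sub_le (hα : -2 < α) (hK : 0 < K) (hu₀ : 0 < u₀)
    (hB1 : B 1 ≤ u₀ ^ 2) (hderiv : ∀ x, 1 ≤ x → HasDerivAt B (B' x) x)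
    (hineq : ∀ x, 1 ≤ x → B' x - α * B x / x ≤ K * √(B x) / x ^ 2) {x : ℝ} (hx : 1 ≤ x) :
    √(B x / x ^ α) ≤ u₀ + K / (α / 2 + 1) := by
  have hxα : 0 < x ^ α := rpow_pos_of_pos (by linarith) α
  have hlow := le_gronwallEnvelope (u₀ := u₀) hα hK.le hx
  have hup := gronwallEnvelope_le (u₀ := u₀) hα hK.le (by linarith : (0 : ℝ) ≤ x)
  rw [sqrt_le_left (by linarith), div_le_iff₀ hxα]
  calc B x ≤ gronwallMajorant u₀ α K x := le_gronwallMajorant hα hK hu₀ hB1 hderiv hineq x hx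
    _ ≤ (u₀ + K / (α / 2 + 1)) ^ 2 * x ^ α := by
      unfold gronwallMajorant
      gcongr
      linarith

end Majorant

theorem gronwall_fourth_moment_general (ε C : ℝ) (hε0 : 0 < ε) (hε1 : ε ≤ 1) (hC : 0 < C)
    (B B' : ℝ → ℝ) (hB1 : B 1 = 4)
    (hderiv : ∀ x : ℝ, 1 ≤ x → HasDerivAt B (B' x) x)
    (hineq : ∀ x : ℝ, 1 ≤ x →
      B' x - (3 / 2) * B x / x ≤ C * ε ^ 2 * Real.sqrt (B x) / x ^ 2) :
    ∀ x : ℝ, 1 ≤ x →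
      Real.sqrt (B x / x ^ ((3 : ℝ) / 2)) ≤ 2 + C * ε ^ 2 ∧
        B x ≤ (2 + C) ^ 2 * x ^ ((3 : ℝ) / 2) := by
  intro x hx
  have hK : 0 < C * ε ^ 2 := by positivity
  have hKC : C * ε ^ 2 ≤ C := mul_le_of_le_one_right hC.le (pow_le_one₀ hε0.le hε1)
  have hsqrt : √(B x / x ^ ((3 : ℝ) / 2)) ≤ 2 + C * ε ^ 2 := by
    refine (sqrt_div_rpow_le_of_deriv_sub_le (u₀ := 2) (by norm_num) hK two_pos
      (by norm_num [hB1]) hderiv hineq hx).trans ?_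
    gcongr
    exact div_le_self hK.le (by norm_num)
  refine ⟨hsqrt, ?_⟩
  have hsq := (sqrt_le_left (by linarith)).1 (hsqrt.trans (by linarith : 2 + C * ε ^ 2 ≤ 2 + C))
  rwa [div_le_iff₀ (rpow_pos_of_pos (by linarith) _)] at hsq

theorem gronwall_fourth_moment (ε C : ℝ) (hε0 : 0 < ε) (hε1 : ε ≤ 1) (hC : 0 < C)
    (B B' : ℝ → ℝ) (hB1 : B 1 = 4) (hBpos : ∀ x : ℝ, 1 ≤ x → 0 ≤ B x)
    (hderiv : ∀ x : ℝ, 1 ≤ x → HasDerivAt B (B' x) x)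
    (hineq : ∀ x : ℝ, 1 ≤ x →
      B' x - (3 / 2) * B x / x ≤ C * ε ^ 2 * Real.sqrt (B x) / x ^ 2) :
    ∀ x : ℝ, 1 ≤ x →
      Real.sqrt (B x / x ^ ((3 : ℝ) / 2)) ≤ 2 + C * ε ^ 2 ∧
        B x ≤ (2 + C) ^ 2 * x ^ ((3 : ℝ) / 2) :=
  gronwall_fourth_moment_general ε C hε0 hε1 hC B B' hB1 hderiv hineq
end
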